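/- Let ρ̃ be a density matrix with trace distance at most ε from ρ = |0⟩⟨0|_A ⊗ (1/2^b) I_B, and partition the n = a+b qubits into C and D with |D| = d > a. If ε + ε' ≤ 1/2 − 2^{a−d−1}, then there is no unitary U such that tr_C(U ρ̃ U†) has trace distance at most ε' from a pure state on D. -/

import Mathlib

open Matrix BigOperators Kronecker
open scoped Classical ComplexOrder

noncomputable section

def ptraceFst {C D : Type*} [Fintype C] (σ : Matrix (C × D) (C × D) ℂ) :
    Matrix D D ℂ := Matrix.of fun y y' => ∑ j : C, σ (j, y) (j, y')

def ptraceSnd {C D : Type*} [Fintype D] (σ : Matrix (C × D) (C × D) ℂ) :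
    Matrix C C ℂ := Matrix.of fun x x' => ∑ j : D, σ (x, j) (x', j)

def traceNorm {n : Type*} [Fintype n] [DecidableEq n] (M : Matrix n n ℂ) : ℝ :=
  ((Matrix.posSemidef_conjTranspose_mul_self M).1.eigenvectorUnitary.1 *
    Matrix.diagonal ((fun x : ℝ => (x : ℂ)) ∘ (√·) ∘ (Matrix.posSemidef_conjTranspose_mul_self M).1.eigenvalues) *
    (star (Matrix.posSemidef_conjTranspose_mul_self M).1.eigenvectorUnitary : Matrix n n ℂ)).trace.re

def traceDist {n : Type*} [Fintype n] [DecidableEq n] (σ σ' : Matrix n n ℂ) : ℝ :=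
  traceNorm (σ - σ') / 2

def IsDensity {n : Type*} [Fintype n] (M : Matrix n n ℂ) : Prop :=
  M.PosSemidef ∧ M.trace = 1

def IsPure {n : Type*} [Fintype n] (σ : Matrix n n ℂ) : Prop :=
  ∃ ψ : n → ℂ, (∑ i, Complex.normSq (ψ i)) = 1 ∧ σ = Matrix.vecMulVec ψ (star ψ)

def inputState (a b : ℕ) :
    Matrix (Fin (2^a) × Fin (2^b)) (Fin (2^a) × Fin (2^b)) ℂ :=
  (Matrix.single 0 0 1) ⊗ₖ (((2:ℂ)^b)⁻¹ • (1 : Matrix (Fin (2^b)) (Fin (2^b)) ℂ))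

def measSub {C D : Type*} [Fintype C] [Fintype D] (σ : Matrix (C × D) (C × D) ℂ) (j : C) :
    Matrix D D ℂ := Matrix.of fun y y' => σ (j, y) (j, y')

def measProb {C D : Type*} [Fintype C] [Fintype D] (σ : Matrix (C × D) (C × D) ℂ) (j : C) : ℝ :=
  ((measSub σ j).trace).re

def gibbs {n : Type*} [Fintype n] [DecidableEq n] (β : ℝ) {H : Matrix n n ℂ}
    (hH : H.IsHermitian) : Matrix n n ℂ :=
  ((hH.cfc (fun x => Real.exp (-β * x))).trace)⁻¹ • hH.cfc (fun x => Real.exp (-β * x))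

def vNEntropy {n : Type*} [Fintype n] [DecidableEq n] (M : Matrix n n ℂ) : ℝ :=
  if h : M.IsHermitian then -∑ i, (h.eigenvalues i) * Real.logb 2 (h.eigenvalues i) else 0

def iterState (n : ℕ) (U : ℕ → Matrix (Fin 2 × Fin (2^n)) (Fin 2 × Fin (2^n)) ℂ) :
    ℕ → Matrix (Fin (2^n)) (Fin (2^n)) ℂ
  | 0 => ((2:ℂ)^n)⁻¹ • 1
  | k+1 => ptraceFst (U k * ((Matrix.single 0 0 1) ⊗ₖ iterState n U k) * (U k)ᴴ)

/-!
Let `P = |ψ⟩⟨ψ|`. Pulling the projection `1_C ⊗ P` back through `U` and the relabelling `e`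
gives a projection `Q` of trace `2^c` with `tr (P σ) = tr (Q ρ̃)`, where `σ = tr_C (U ρ̃ U†)`.
An effect `0 ≤ Q ≤ 1` cannot tell two states apart by more than their trace distance, so
`tr (Q ρ̃) ≥ 1 - ε'` and `tr (Q ρ) ≥ 1 - ε - ε'`. But `ρ ≤ 2^{-b} · 1`, whence
`tr (Q ρ) ≤ 2^{c-b} = 2^{a-d} = 2 · 2^{a-d-1}`, and the hypothesis on `ε + ε'` would force
`2^{a-d-1} ≥ 1/2`, whereas it is at most `1/4`.
-/

open scoped MatrixOrder

variable {m n C D : Type*}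

lemma Matrix.IsHermitian.trace_cfc [Fintype n] [DecidableEq n] {A : Matrix n n ℂ}
    (hA : A.IsHermitian) (f : ℝ → ℝ) :
    (cfc f A).trace = ∑ i, (f (hA.eigenvalues i) : ℂ) := by
  rw [hA.cfc_eq, IsHermitian.cfc, Unitary.conjStarAlgAut_apply, trace_mul_cycle,
    Unitary.coe_star_mul_self, one_mul, trace_diagonal]
  rfl

lemma Matrix.IsHermitian.trace_mul_eq_sum_eigenvalues [Fintype n] [DecidableEq n]
    {A : Matrix n n ℂ} (hA : A.IsHermitian) (Q : Matrix n n ℂ) :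
    (Q * A).trace = ∑ i, (star (hA.eigenvectorUnitary : Matrix n n ℂ) * Q *
      hA.eigenvectorUnitary) i i * hA.eigenvalues i := by
  conv_lhs => rw [hA.spectral_theorem, Unitary.conjStarAlgAut_apply, ← mul_assoc, ← mul_assoc,
    trace_mul_cycle, ← mul_assoc]
  simp [trace, mul_diagonal]

lemma traceNorm_eq_re_trace_cfc_sqrt [Fintype n] [DecidableEq n] (M : Matrix n n ℂ) :
    traceNorm M = (cfc Real.sqrt (Mᴴ * M)).trace.re := by
  rw [(posSemidef_conjTranspose_mul_self M).1.cfc_eq]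
  rfl

lemma Matrix.IsHermitian.traceNorm_eq_sum_abs_eigenvalues [Fintype n] [DecidableEq n]
    {A : Matrix n n ℂ} (hA : A.IsHermitian) :
    traceNorm A = ∑ i, |hA.eigenvalues i| := by
  have hsqrt : cfc Real.sqrt (Aᴴ * A) = cfc (fun x : ℝ => |x|) A := by
    rw [hA.eq, ← sq, ← cfc_comp_pow _ _ _ Real.continuous_sqrt.continuousOn hA.isSelfAdjoint]
    simp only [Real.sqrt_sq_eq_abs]
  rw [traceNorm_eq_re_trace_cfc_sqrt, hsqrt, hA.trace_cfc, Complex.re_sum]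
  simp

lemma traceDist_comm [Fintype n] [DecidableEq n] (σ σ' : Matrix n n ℂ) :
    traceDist σ σ' = traceDist σ' σ := by
  simp only [traceDist, traceNorm_eq_re_trace_cfc_sqrt, ← neg_sub σ, conjTranspose_neg,
    neg_mul_neg]

lemma re_diag_mem_Icc_of_mem_Icc [DecidableEq n] {R : Matrix n n ℂ} (hR : R ∈ Set.Icc 0 1)
    (i : n) : (R i i).re ∈ Set.Icc 0 1 := by
  have h0 := (Complex.le_def.mp (hR.1.posSemidef.diag_nonneg (i := i))).1
  have h1 := (Complex.le_def.mp ((le_iff.mp hR.2).diag_nonneg (i := i))).1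
  simp only [Matrix.sub_apply, one_apply_eq, Complex.sub_re, Complex.one_re,
    Complex.zero_re] at h0 h1
  constructor <;> linarith

lemma re_trace_mul_le_add_traceDist [Fintype n] [DecidableEq n] {Q σ σ' : Matrix n n ℂ}
    (hσ : σ.IsHermitian) (hσ' : σ'.IsHermitian) (htr : σ.trace = σ'.trace)
    (hQ : Q ∈ Set.Icc 0 1) :
    (Q * σ).trace.re ≤ (Q * σ').trace.re + traceDist σ σ' := by
  have hΔ : (σ - σ').IsHermitian := hσ.sub hσ'
  set V : Matrix n n ℂ := (hΔ.eigenvectorUnitary : Matrix n n ℂ)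
  set μ := hΔ.eigenvalues
  have hR : ∀ i, ((star V * Q * V) i i).re ∈ Set.Icc 0 1 := by
    refine re_diag_mem_Icc_of_mem_Icc ⟨star_left_conjugate_nonneg hQ.1 V, ?_⟩
    simpa [V] using star_left_conjugate_le_conjugate hQ.2 V
  have hμ : ∑ i, μ i = 0 := by
    have h := hΔ.trace_cfc id
    rw [cfc_id ℝ (σ - σ'), trace_sub, htr, sub_self] at h
    exact_mod_cast h.symm
  have key : (Q * (σ - σ')).trace.re ≤ traceNorm (σ - σ') / 2 := by
    rw [hΔ.trace_mul_eq_sum_eigenvalues, hΔ.traceNorm_eq_sum_abs_eigenvalues, Complex.re_sum]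
    calc ∑ i, ((star V * Q * V) i i * μ i).re ≤ ∑ i, (|μ i| + μ i) / 2 := by
          refine Finset.sum_le_sum fun i _ => ?_
          obtain ⟨h0, h1⟩ := hR i
          rw [Complex.mul_re, Complex.ofReal_re, Complex.ofReal_im, mul_zero, sub_zero]
          cases abs_cases (μ i) <;> nlinarith
      _ = (∑ i, |μ i|) / 2 := by rw [← Finset.sum_div, Finset.sum_add_distrib, hμ, add_zero]
  rw [mul_sub, trace_sub, Complex.sub_re] at key
  rw [traceDist]
  linarith

lemma dotProduct_star_self_eq_one [Fintype n] {ψ : n → ℂ}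
    (hψ : ∑ i, Complex.normSq (ψ i) = 1) : star ψ ⬝ᵥ ψ = 1 := by
  simp [dotProduct, ← Complex.normSq_eq_conj_mul_self, ← Complex.ofReal_sum, hψ]

lemma isStarProjection_vecMulVec [Fintype n] {ψ : n → ℂ}
    (hψ : ∑ i, Complex.normSq (ψ i) = 1) : IsStarProjection (vecMulVec ψ (star ψ)) where
  isIdempotentElem := by
    rw [IsIdempotentElem, vecMulVec_mul_vecMulVec, dotProduct_star_self_eq_one hψ, one_smul]
  isSelfAdjoint := by
    rw [IsSelfAdjoint, star_eq_conjTranspose, conjTranspose_vecMulVec, star_star]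

lemma IsStarProjection.one_le_re_trace_mul_add_traceDist [Fintype n] [DecidableEq n]
    {P σ : Matrix n n ℂ} (hP : IsStarProjection P) (hPtr : P.trace = 1) (hσ : σ.IsHermitian)
    (hσtr : σ.trace = 1) : 1 ≤ (P * σ).trace.re + traceDist σ P := by
  have h := re_trace_mul_le_add_traceDist hP.isSelfAdjoint.isHermitian hσ (hPtr.trans hσtr.symm)
    hP.mem_Icc
  rwa [hP.isIdempotentElem.eq, hPtr, Complex.one_re, traceDist_comm] at h

lemma IsStarProjection.conjTranspose_mul_mul [Fintype n] [DecidableEq n] {P U : Matrix n n ℂ}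
    (hP : IsStarProjection P) (hU : U ∈ unitaryGroup n ℂ) : IsStarProjection (Uᴴ * P * U) where
  isIdempotentElem := by
    have hUU : U * Uᴴ = 1 := Unitary.mul_star_self_of_mem hU
    rw [IsIdempotentElem, show Uᴴ * P * U * (Uᴴ * P * U) = Uᴴ * P * (U * Uᴴ) * P * U by
      noncomm_ring, hUU, mul_one, mul_assoc Uᴴ P P, hP.isIdempotentElem.eq]
  isSelfAdjoint := by
    rw [IsSelfAdjoint, star_eq_conjTranspose, conjTranspose_mul, conjTranspose_mul,
      conjTranspose_conjTranspose, hP.isSelfAdjoint.isHermitian.eq, mul_assoc]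

lemma IsStarProjection.submatrix_equiv [Fintype m] [Fintype n] {P : Matrix n n ℂ}
    (hP : IsStarProjection P) (e : m ≃ n) : IsStarProjection (P.submatrix e e) where
  isIdempotentElem := by
    rw [IsIdempotentElem, submatrix_mul_equiv, hP.isIdempotentElem.eq]
  isSelfAdjoint := by
    rw [IsSelfAdjoint, star_eq_conjTranspose, conjTranspose_submatrix,
      hP.isSelfAdjoint.isHermitian.eq]

lemma IsStarProjection.one_kronecker [Fintype m] [DecidableEq m] [Fintype n]
    {P : Matrix n n ℂ} (hP : IsStarProjection P) :
    IsStarProjection ((1 : Matrix m m ℂ) ⊗ₖ P) where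
  isIdempotentElem := by
    rw [IsIdempotentElem, ← mul_kronecker_mul, one_mul, hP.isIdempotentElem.eq]
  isSelfAdjoint := by
    rw [IsSelfAdjoint, star_eq_conjTranspose, conjTranspose_kronecker, conjTranspose_one,
      hP.isSelfAdjoint.isHermitian.eq]

lemma trace_submatrix_equiv [Fintype m] [Fintype n] (M : Matrix n n ℂ) (e : m ≃ n) :
    (M.submatrix e e).trace = M.trace :=
  Equiv.sum_comp e fun i => M i i

lemma trace_mul_reindex [Fintype m] [Fintype n] (Q : Matrix n n ℂ) (M : Matrix m m ℂ)
    (e : m ≃ n) : (Q * reindex e e M).trace = (Q.submatrix e e * M).trace := by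
  rw [← trace_submatrix_equiv _ e, reindex_apply, ← submatrix_mul_equiv _ _ _ e]
  simp

lemma trace_ptraceFst [Fintype C] [Fintype D] (M : Matrix (C × D) (C × D) ℂ) :
    (ptraceFst M).trace = M.trace := by
  simp only [ptraceFst, trace, diag, of_apply, Fintype.sum_prod_type]
  exact Finset.sum_comm

lemma Matrix.IsHermitian.ptraceFst [Fintype C] {M : Matrix (C × D) (C × D) ℂ}
    (hM : M.IsHermitian) : (ptraceFst M).IsHermitian := by
  ext y y'
  simp only [conjTranspose_apply, _root_.ptraceFst, of_apply, star_sum]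
  exact Finset.sum_congr rfl fun j _ => by rw [← conjTranspose_apply, hM.eq]

lemma trace_mul_ptraceFst [Fintype C] [DecidableEq C] [Fintype D] (P : Matrix D D ℂ)
    (M : Matrix (C × D) (C × D) ℂ) :
    (P * ptraceFst M).trace = ((1 : Matrix C C ℂ) ⊗ₖ P * M).trace := by
  simp only [trace, diag, mul_apply, ptraceFst, of_apply, Fintype.sum_prod_type, kronecker_apply,
    one_apply, ite_mul, one_mul, zero_mul, Finset.sum_ite_irrel, Finset.sum_const_zero,
    Finset.sum_ite_eq, Finset.mem_univ, if_true, Finset.mul_sum]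
  conv_rhs => rw [Finset.sum_comm]
  exact Finset.sum_congr rfl fun _ _ => Finset.sum_comm

lemma trace_ptraceFst_conj_reindex [Fintype m] [Fintype C] [Fintype D] [DecidableEq C]
    [DecidableEq D] {U : Matrix (C × D) (C × D) ℂ} (hU : U ∈ unitaryGroup (C × D) ℂ)
    (ρ : Matrix m m ℂ) (e : m ≃ C × D) :
    (ptraceFst (U * reindex e e ρ * Uᴴ)).trace = ρ.trace := by
  have hUU : Uᴴ * U = 1 := Unitary.star_mul_self_of_mem hU
  rw [trace_ptraceFst, trace_mul_cycle, hUU, one_mul, reindex_apply, trace_submatrix_equiv]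

lemma trace_mul_ptraceFst_conj_reindex [Fintype m] [Fintype C] [DecidableEq C] [Fintype D]
    (P : Matrix D D ℂ) (U : Matrix (C × D) (C × D) ℂ) (ρ : Matrix m m ℂ) (e : m ≃ C × D) :
    (P * ptraceFst (U * reindex e e ρ * Uᴴ)).trace =
      ((Uᴴ * ((1 : Matrix C C ℂ) ⊗ₖ P) * U).submatrix e e * ρ).trace := by
  rw [trace_mul_ptraceFst, ← mul_assoc, ← mul_assoc, trace_mul_cycle, ← mul_assoc,
    trace_mul_reindex]

lemma re_trace_mul_diagonal_le [Fintype n] [DecidableEq n] {Q : Matrix n n ℂ}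
    (hQ : Q.PosSemidef) {w : n → ℝ} {c : ℝ} (hw : ∀ i, w i ≤ c) :
    (Q * diagonal fun i => (w i : ℂ)).trace.re ≤ c * Q.trace.re := by
  simp only [trace, diag, mul_diagonal, Complex.re_sum, Finset.mul_sum, Complex.re_mul_ofReal]
  exact Finset.sum_le_sum fun i _ =>
    by nlinarith [hw i, (Complex.le_def.mp (hQ.diag_nonneg (i := i))).1, Complex.zero_re]

lemma inputState_eq_diagonal (a b : ℕ) :
    inputState a b = diagonal fun p => ((if p.1 = 0 then ((2:ℝ) ^ b)⁻¹ else 0 : ℝ) : ℂ) := by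
  rw [inputState, ← diagonal_single, smul_one_eq_diagonal, diagonal_kronecker_diagonal]
  congr 1; funext p
  by_cases h : p.1 = 0 <;> simp [h]

lemma isDensity_inputState (a b : ℕ) : IsDensity (inputState a b) := by
  rw [inputState_eq_diagonal]
  refine ⟨PosSemidef.diagonal fun p => ?_, ?_⟩
  · split_ifs <;> simp
  · rw [trace_diagonal, Fintype.sum_prod_type, Finset.sum_eq_single 0 (by simp_all) (by simp)]
    simp

lemma re_trace_mul_inputState_le {a b : ℕ}
    {Q : Matrix (Fin (2^a) × Fin (2^b)) (Fin (2^a) × Fin (2^b)) ℂ} (hQ : Q.PosSemidef) :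
    (Q * inputState a b).trace.re ≤ Q.trace.re / 2 ^ b := by
  rw [inputState_eq_diagonal, div_eq_inv_mul]
  exact re_trace_mul_diagonal_le hQ fun p => by split_ifs <;> simp

lemma two_pow_div_two_pow_eq {a b c d : ℕ} (hn : a + b = c + d) :
    (2:ℝ) ^ c / 2 ^ b = 2 * 2 ^ ((a:ℤ) - d - 1) := by
  rw [← zpow_natCast, ← zpow_natCast, ← zpow_sub₀ two_ne_zero,
    show (c:ℤ) - b = (a - d - 1) + 1 by omega, zpow_add_one₀ two_ne_zero, mul_comm]

theorem stmt7 (a b c d : ℕ) (hn : a + b = c + d) (hd : a < d) (ε ε' : ℝ)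
    (hε : ε + ε' ≤ 1/2 - (2:ℝ)^((a:ℤ) - d - 1))
    (ρt : Matrix (Fin (2^a) × Fin (2^b)) (Fin (2^a) × Fin (2^b)) ℂ)
    (hρt : IsDensity ρt) (hclose : traceDist ρt (inputState a b) ≤ ε)
    (e : (Fin (2^a) × Fin (2^b)) ≃ (Fin (2^c) × Fin (2^d))) :
    ¬ ∃ U ∈ Matrix.unitaryGroup (Fin (2^c) × Fin (2^d)) ℂ,
        ∃ ψ : Fin (2^d) → ℂ, (∑ i, Complex.normSq (ψ i)) = 1 ∧
          traceDist (ptraceFst (U * (Matrix.reindex e e ρt) * Uᴴ))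
            (Matrix.vecMulVec ψ (star ψ)) ≤ ε' := by
  rintro ⟨U, hU, ψ, hψ, hdist⟩
  set P := vecMulVec ψ (star ψ)
  set Q := (Uᴴ * ((1 : Matrix (Fin (2^c)) (Fin (2^c)) ℂ) ⊗ₖ P) * U).submatrix e e
  have hP : IsStarProjection P := isStarProjection_vecMulVec hψ
  have hQ : IsStarProjection Q := (hP.one_kronecker.conjTranspose_mul_mul hU).submatrix_equiv e
  have hPtr : P.trace = 1 := by
    rw [trace_vecMulVec, dotProduct_comm, dotProduct_star_self_eq_one hψ]
  have hQtr : Q.trace.re = 2 ^ c := by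
    have hUU : U * Uᴴ = 1 := Unitary.mul_star_self_of_mem hU
    rw [trace_submatrix_equiv, trace_mul_cycle, hUU, one_mul, trace_kronecker, hPtr]
    simpa using Complex.ofReal_re (2 ^ c)
  have hfid : 1 ≤ (Q * ρt).trace.re + ε' := by
    have hσ := ((hρt.1.submatrix e.symm).mul_mul_conjTranspose_same U).1.ptraceFst
    have h := hP.one_le_re_trace_mul_add_traceDist (σ := ptraceFst (U * reindex e e ρt * Uᴴ))
      hPtr hσ ((trace_ptraceFst_conj_reindex hU ρt e).trans hρt.2)
    rw [trace_mul_ptraceFst_conj_reindex] at h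
    linarith
  have hρ := re_trace_mul_le_add_traceDist hρt.1.1 (isDensity_inputState a b).1.1
    (hρt.2.trans (isDensity_inputState a b).2.symm) hQ.mem_Icc
  have hin := re_trace_mul_inputState_le hQ.nonneg.posSemidef
  have hexp := two_pow_div_two_pow_eq hn
  have hsmall : (2:ℝ) ^ ((a:ℤ) - d - 1) ≤ 1 / 4 :=
    (zpow_le_zpow_right₀ one_le_two (by omega : (a:ℤ) - d - 1 ≤ -2)).trans_eq (by norm_num)
  rw [hQtr] at hin
  linarith

end
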